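/- Let g : ℝ^{m×n} → ℝ be convex and differentiable, λ > 0, and d > min(m,n). Then every local minimizer of φ(A,B) = g(AᵀB) + (λ/2)(‖A‖_F² + ‖B‖_F²) over A ∈ ℝ^{d×m}, B ∈ ℝ^{d×n} is a global minimizer. -/

import Mathlib

/-!
Let `X = AᵀB` and `L = Dg(X)` at a local minimizer `(A, B)`. Stationarity along `(A, 0)` and
`(0, B)` gives `L X = -λ‖A‖² = -λ‖B‖²`, and the remaining first-order conditions force `A` and `B`
to have the same left kernel. As `d > min m n`, that kernel contains a unit vector `w`; along
`(A + √r • w uᵀ, B + √r • w vᵀ)` the product `AᵀB` moves by exactly `r • u vᵀ`, so local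
minimality gives `L (u vᵀ) ≥ -λ/2 (‖u‖² + ‖v‖²)`. Summing over the rows of any `(A', B')` yields
`L (A'ᵀB') ≥ -λ/2 (‖A'‖² + ‖B'‖²)`, and the gradient inequality of the convex `g` gives
`φ (A', B') ≥ g X + L (A'ᵀB') - L X + λ/2 (‖A'‖² + ‖B'‖²) ≥ g X - L X = φ (A, B)`.
-/

open Matrix

attribute [local instance] Matrix.normedAddCommGroup Matrix.normedSpace

/-- Squared Frobenius norm of a real matrix. -/
noncomputable def frobNormSq {m n : Type*} [Fintype m] [Fintype n]
    (A : Matrix m n ℝ) : ℝ :=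
  ∑ i, ∑ j, (A i j) ^ 2

open Finset

-- `Matrix.vecMulVec_zero` is stated only for two vectors with the same index type.
@[simp]
lemma Matrix.vecMulVec_zero_right {α m n : Type*} [MulZeroClass α] (w : m → α) :
    vecMulVec w (0 : n → α) = 0 :=
  ext fun _ _ => mul_zero _

lemma Matrix.transpose_mul_eq_sum_vecMulVec {ι m n : Type*} [Fintype ι] (P : Matrix ι m ℝ)
    (Q : Matrix ι n ℝ) :
    Pᵀ * Q = ∑ i, vecMulVec (P i) (Q i) := by
  ext k l
  simp [mul_apply, Matrix.sum_apply, vecMulVec_apply]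

section Frobenius

variable {ι m n : Type*} [Fintype ι] [Fintype m] [Fintype n]

noncomputable def frobInner (P Q : Matrix m n ℝ) : ℝ :=
  ∑ i, ∑ j, P i j * Q i j

@[simp]
lemma frobInner_zero (P : Matrix m n ℝ) : frobInner P 0 = 0 := by
  simp [frobInner]

lemma frobInner_self (P : Matrix m n ℝ) : frobInner P P = frobNormSq P := by
  simp [frobInner, frobNormSq, sq]

lemma frobNormSq_add_smul (P Q : Matrix m n ℝ) (t : ℝ) :
    frobNormSq (P + t • Q) = frobNormSq P + 2 * t * frobInner P Q + t ^ 2 * frobNormSq Q := by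
  simp only [frobNormSq, frobInner, Matrix.add_apply, Matrix.smul_apply, smul_eq_mul, mul_sum,
    ← sum_add_distrib]
  congr! 2 with i _ j _
  ring

lemma frobInner_vecMulVec (P : Matrix ι m ℝ) (w : ι → ℝ) (u : m → ℝ) :
    frobInner P (vecMulVec w u) = (w ᵥ* P) ⬝ᵥ u := by
  simp only [frobInner, vecMulVec_apply, dotProduct, vecMul, sum_mul]
  rw [sum_comm]
  congr! 2 with j _ i _
  ring

lemma frobNormSq_vecMulVec (w : ι → ℝ) (u : m → ℝ) :
    frobNormSq (vecMulVec w u) = (w ⬝ᵥ w) * (u ⬝ᵥ u) := by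
  rw [← frobInner_self, frobInner_vecMulVec, vecMul_vecMulVec, smul_dotProduct, smul_eq_mul]

lemma frobNormSq_eq_sum_dotProduct (P : Matrix ι m ℝ) :
    frobNormSq P = ∑ i, P i ⬝ᵥ P i := by
  simp [frobNormSq, dotProduct, sq]

lemma neg_le_apply_transpose_mul {L : Matrix m n ℝ →ₗ[ℝ] ℝ} {c : ℝ}
    (h : ∀ u v, -(c * (u ⬝ᵥ u + v ⬝ᵥ v)) ≤ L (vecMulVec u v)) (P : Matrix ι m ℝ)
    (Q : Matrix ι n ℝ) : -(c * (frobNormSq P + frobNormSq Q)) ≤ L (Pᵀ * Q) := by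
  rw [transpose_mul_eq_sum_vecMulVec, map_sum, frobNormSq_eq_sum_dotProduct,
    frobNormSq_eq_sum_dotProduct, ← sum_add_distrib, mul_sum, ← sum_neg_distrib]
  exact sum_le_sum fun i _ => h (P i) (Q i)

lemma exists_dotProduct_self_eq_one_vecMul_eq_zero (P : Matrix ι m ℝ)
    (h : Fintype.card m < Fintype.card ι) : ∃ w : ι → ℝ, w ⬝ᵥ w = 1 ∧ w ᵥ* P = 0 := by
  obtain ⟨w, hwP, hw⟩ := Submodule.exists_mem_ne_zero_of_ne_bot
    (LinearMap.ker_ne_bot_of_finrank_lt (f := P.vecMulLinear) (by simpa using h))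
  have hpos : 0 < w ⬝ᵥ w :=
    lt_of_le_of_ne (sum_nonneg fun i _ => mul_self_nonneg (w i))
      (Ne.symm (dotProduct_self_eq_zero.not.mpr hw))
  refine ⟨(√(w ⬝ᵥ w))⁻¹ • w, ?_, ?_⟩
  · rw [smul_dotProduct, dotProduct_smul, smul_smul, smul_eq_mul, ← sq, inv_pow,
      Real.sq_sqrt hpos.le, inv_mul_cancel₀ hpos.ne']
  · rw [smul_vecMul, show w ᵥ* P = 0 from hwP, smul_zero]

end Frobenius

section Calculus

variable {E : Type*} [NormedAddCommGroup E] [NormedSpace ℝ E]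

theorem ConvexOn.apply_sub_apply_le_of_hasFDerivAt {g : E → ℝ} (hg : ConvexOn ℝ Set.univ g)
    {L : E →L[ℝ] ℝ} {x : E} (hL : HasFDerivAt g L x) (y : E) : L y - L x ≤ g y - g x := by
  set γ : ℝ →ᵃ[ℝ] E := AffineMap.lineMap x y
  have hline : ConvexOn ℝ Set.univ (g ∘ γ) := by simpa using hg.comp_affineMap γ
  have hderiv : HasDerivAt (g ∘ γ) (L (y - x)) 0 :=
    (by simpa [γ] using hL : HasFDerivAt g L (γ 0)).comp_hasDerivAt 0
      AffineMap.hasDerivAt_lineMap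
  have := hline.le_slope_of_hasDerivAt (Set.mem_univ 0) (Set.mem_univ 1) one_pos hderiv
  simp only [γ, slope_def_field, Function.comp_apply, AffineMap.lineMap_apply_one,
    AffineMap.lineMap_apply_zero, sub_zero, div_one] at this
  rwa [map_sub] at this

theorem HasFDerivAt.hasDerivAt_comp_add_smul_add_sq_smul {g : E → ℝ} {L : E →L[ℝ] ℝ} {x : E}
    (hL : HasFDerivAt g L x) (v w : E) :
    HasDerivAt (fun t : ℝ => g (x + t • v + t ^ 2 • w)) (L v) 0 := by
  have hcurve : HasDerivAt (fun t : ℝ => x + t • v + t ^ 2 • w) v 0 := by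
    simpa using (((hasDerivAt_id' (0 : ℝ)).smul_const v).const_add x).fun_add
      ((hasDerivAt_pow 2 (0 : ℝ)).smul_const w)
  exact (by simpa using hL : HasFDerivAt g L (x + (0 : ℝ) • v + (0 : ℝ) ^ 2 • w)).comp_hasDerivAt
    0 hcurve

theorem IsLocalMinOn.hasDerivAt_nonneg_of_Ici {θ : ℝ → ℝ} {θ' a : ℝ}
    (h : IsLocalMinOn θ (Set.Ici a) a) (hθ : HasDerivAt θ θ' a) : 0 ≤ θ' := by
  have hcone : (1 : ℝ) ∈ posTangentConeAt (Set.Ici a) a :=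
    one_mem_posTangentConeAt_iff_frequently.mpr
      (Filter.Eventually.frequently
        (eventually_nhdsWithin_of_forall fun _ hx => Set.mem_Ici.mpr hx.le))
  simpa using h.hasFDerivWithinAt_nonneg hθ.hasDerivWithinAt.hasFDerivWithinAt hcone

end Calculus

section FactoredObjective

variable {ι m n : Type*} [Fintype ι] [Fintype m] [Fintype n]

noncomputable def factoredObjective (g : Matrix m n ℝ → ℝ) (lam : ℝ)
    (p : Matrix ι m ℝ × Matrix ι n ℝ) : ℝ :=
  g (p.1ᵀ * p.2) + lam / 2 * (frobNormSq p.1 + frobNormSq p.2)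

lemma factoredObjective_add_smul (g : Matrix m n ℝ → ℝ) (lam : ℝ) (A ΔA : Matrix ι m ℝ)
    (B ΔB : Matrix ι n ℝ) (t : ℝ) :
    factoredObjective g lam (A + t • ΔA, B + t • ΔB) =
      g (Aᵀ * B + t • (ΔAᵀ * B + Aᵀ * ΔB) + t ^ 2 • (ΔAᵀ * ΔB))
        + lam / 2 * (frobNormSq A + frobNormSq B)
        + lam * (frobInner A ΔA + frobInner B ΔB) * t
        + lam / 2 * (frobNormSq ΔA + frobNormSq ΔB) * t ^ 2 := by
  have hprod : (A + t • ΔA)ᵀ * (B + t • ΔB)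
      = Aᵀ * B + t • (ΔAᵀ * B + Aᵀ * ΔB) + t ^ 2 • (ΔAᵀ * ΔB) := by
    simp only [transpose_add, transpose_smul, Matrix.add_mul, Matrix.mul_add, Matrix.smul_mul,
      Matrix.mul_smul, smul_add, smul_smul]
    module
  rw [factoredObjective, hprod, frobNormSq_add_smul, frobNormSq_add_smul]
  ring

variable {g : Matrix m n ℝ → ℝ} {lam : ℝ} {A : Matrix ι m ℝ} {B : Matrix ι n ℝ}
  {L : Matrix m n ℝ →L[ℝ] ℝ}

namespace IsLocalMin

theorem factoredObjective_lineDeriv_eq_zero (hmin : IsLocalMin (factoredObjective g lam) (A, B))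
    (hL : HasFDerivAt g L (Aᵀ * B)) (ΔA : Matrix ι m ℝ) (ΔB : Matrix ι n ℝ) :
    L (ΔAᵀ * B + Aᵀ * ΔB) + lam * (frobInner A ΔA + frobInner B ΔB) = 0 := by
  have hγ : ContinuousAt (fun t : ℝ => (A + t • ΔA, B + t • ΔB)) 0 := by fun_prop
  have hline := IsLocalMin.comp_continuous (by simpa using hmin) hγ
  simp only [Function.comp_def, factoredObjective_add_smul] at hline
  have h := hline.hasDerivAt_eq_zero
    ((((hL.hasDerivAt_comp_add_smul_add_sq_smul _ _).add_const _).fun_add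
      ((hasDerivAt_id' 0).const_mul _)).fun_add ((hasDerivAt_pow 2 0).const_mul _))
  norm_num at h
  exact h

theorem apply_transpose_mul_left (hmin : IsLocalMin (factoredObjective g lam) (A, B))
    (hL : HasFDerivAt g L (Aᵀ * B)) (ΔA : Matrix ι m ℝ) :
    L (ΔAᵀ * B) = -(lam * frobInner A ΔA) := by
  have h := hmin.factoredObjective_lineDeriv_eq_zero hL ΔA 0
  simp only [Matrix.mul_zero, add_zero, frobInner_zero] at h
  linarith

theorem apply_transpose_mul_right (hmin : IsLocalMin (factoredObjective g lam) (A, B))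
    (hL : HasFDerivAt g L (Aᵀ * B)) (ΔB : Matrix ι n ℝ) :
    L (Aᵀ * ΔB) = -(lam * frobInner B ΔB) := by
  have h := hmin.factoredObjective_lineDeriv_eq_zero hL 0 ΔB
  simp only [transpose_zero, Matrix.zero_mul, zero_add, frobInner_zero] at h
  linarith

theorem vecMul_right_eq_zero (hmin : IsLocalMin (factoredObjective g lam) (A, B))
    (hL : HasFDerivAt g L (Aᵀ * B)) (hlam : lam ≠ 0) {w : ι → ℝ} (hwA : w ᵥ* A = 0) :
    w ᵥ* B = 0 := by
  have h := hmin.apply_transpose_mul_right hL (vecMulVec w (w ᵥ* B))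
  rw [mul_vecMulVec, mulVec_transpose, hwA, zero_vecMulVec, map_zero, frobInner_vecMulVec,
    zero_eq_neg, mul_eq_zero] at h
  exact dotProduct_self_eq_zero.mp (h.resolve_left hlam)

theorem vecMul_left_eq_zero (hmin : IsLocalMin (factoredObjective g lam) (A, B))
    (hL : HasFDerivAt g L (Aᵀ * B)) (hlam : lam ≠ 0) {w : ι → ℝ} (hwB : w ᵥ* B = 0) :
    w ᵥ* A = 0 := by
  have h := hmin.apply_transpose_mul_left hL (vecMulVec w (w ᵥ* A))
  rw [transpose_vecMulVec, vecMulVec_mul, hwB, vecMulVec_zero_right, map_zero,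
    frobInner_vecMulVec, zero_eq_neg, mul_eq_zero] at h
  exact dotProduct_self_eq_zero.mp (h.resolve_left hlam)

theorem neg_le_apply_vecMulVec (hmin : IsLocalMin (factoredObjective g lam) (A, B))
    (hL : HasFDerivAt g L (Aᵀ * B)) {w : ι → ℝ} (hw : w ⬝ᵥ w = 1) (hwA : w ᵥ* A = 0)
    (hwB : w ᵥ* B = 0) (u : m → ℝ) (v : n → ℝ) :
    -(lam / 2 * (u ⬝ᵥ u + v ⬝ᵥ v)) ≤ L (vecMulVec u v) := by
  set c := lam / 2 * (u ⬝ᵥ u + v ⬝ᵥ v)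
  set θ : ℝ → ℝ := fun r => g (Aᵀ * B + r • vecMulVec u v) + c * r
  have hcurve : ∀ t : ℝ, factoredObjective g lam (A + t • vecMulVec w u, B + t • vecMulVec w v)
      = θ (t ^ 2) + lam / 2 * (frobNormSq A + frobNormSq B) := by
    intro t
    rw [factoredObjective_add_smul, transpose_vecMulVec, vecMulVec_mul_vecMulVec, hw, one_smul]
    simp only [θ, c, vecMulVec_mul, mul_vecMulVec, mulVec_transpose, hwA, hwB, zero_vecMulVec,
      vecMulVec_zero_right, frobInner_vecMulVec, frobNormSq_vecMulVec, hw, zero_dotProduct,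
      add_zero, smul_zero]
    ring
  have hθmin : IsLocalMinOn θ (Set.Ici 0) 0 := by
    have hγ : Continuous fun r : ℝ => (A + √r • vecMulVec w u, B + √r • vecMulVec w v) := by
      fun_prop
    have hγ0 := hγ.tendsto 0
    simp only [Real.sqrt_zero, zero_smul, add_zero] at hγ0
    filter_upwards [nhdsWithin_le_nhds (hγ0.eventually hmin), self_mem_nhdsWithin] with r hr hr0
    have h0 := hcurve 0
    have hr' := hcurve √r
    rw [Real.sq_sqrt hr0] at hr'
    simp only [zero_smul, add_zero, zero_pow two_ne_zero] at h0
    linarith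
  have hθ : HasDerivAt θ (L (vecMulVec u v) + c) 0 := by
    have h := hL.hasDerivAt_comp_add_smul_add_sq_smul (vecMulVec u v) 0
    simp only [smul_zero, add_zero] at h
    have h' := h.fun_add ((hasDerivAt_id' 0).const_mul c)
    rw [mul_one] at h'
    exact h'
  linarith [hθmin.hasDerivAt_nonneg_of_Ici hθ]

end IsLocalMin

end FactoredObjective

theorem no_spurious_local_minimizers {d m n : ℕ} (hd : min m n < d)
    (g : Matrix (Fin m) (Fin n) ℝ → ℝ)
    (hconv : ConvexOn ℝ Set.univ g)
    (hg : Differentiable ℝ g)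
    (lam : ℝ) (hlam : 0 < lam)
    (φ : Matrix (Fin d) (Fin m) ℝ × Matrix (Fin d) (Fin n) ℝ → ℝ)
    (hφ : ∀ p, φ p = g (p.1ᵀ * p.2) + lam / 2 * (frobNormSq p.1 + frobNormSq p.2))
    (A : Matrix (Fin d) (Fin m) ℝ) (B : Matrix (Fin d) (Fin n) ℝ)
    (hloc : IsLocalMin φ (A, B)) :
    ∀ A' B', φ (A, B) ≤ φ (A', B') := by
  obtain rfl : φ = factoredObjective g lam := funext hφ
  have hL := (hg (Aᵀ * B)).hasFDerivAt
  obtain ⟨w, hw, hwA, hwB⟩ : ∃ w : Fin d → ℝ, w ⬝ᵥ w = 1 ∧ w ᵥ* A = 0 ∧ w ᵥ* B = 0 := by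
    rcases min_lt_iff.mp hd with hmd | hnd
    · obtain ⟨w, hw, hwA⟩ := exists_dotProduct_self_eq_one_vecMul_eq_zero A (by simpa using hmd)
      exact ⟨w, hw, hwA, hloc.vecMul_right_eq_zero hL hlam.ne' hwA⟩
    · obtain ⟨w, hw, hwB⟩ := exists_dotProduct_self_eq_one_vecMul_eq_zero B (by simpa using hnd)
      exact ⟨w, hw, hloc.vecMul_left_eq_zero hL hlam.ne' hwB, hwB⟩
  intro A' B'
  set L := fderiv ℝ g (Aᵀ * B)
  have hgrad : L (A'ᵀ * B') - L (Aᵀ * B) ≤ g (A'ᵀ * B') - g (Aᵀ * B) :=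
    hconv.apply_sub_apply_le_of_hasFDerivAt hL (A'ᵀ * B')
  have hprod : -(lam / 2 * (frobNormSq A' + frobNormSq B')) ≤ L (A'ᵀ * B') :=
    neg_le_apply_transpose_mul (L := L.toLinearMap)
      (hloc.neg_le_apply_vecMulVec hL hw hwA hwB) A' B'
  have hA := hloc.apply_transpose_mul_left hL A
  have hB := hloc.apply_transpose_mul_right hL B
  rw [frobInner_self] at hA hB
  simp only [factoredObjective]
  linarith
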